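/- Let A be a field of characteristic zero, B a finite-dimensional commutative A-algebra all of whose residue fields are A, and L a field extension of A. Let R be an integral domain which is an A-algebra, F its field of fractions, and e : R → L ⊗[A] B an A-algebra homomorphism such that for every A-algebra homomorphism ρ : B → A the composite ρ^L ∘ e : R → L is injective. Then there is a unique A-algebra homomorphism ẽ : F → L ⊗[A] B such that ẽ composed with the canonical map R → F equals e. -/

import Mathlib

/-- For an `A`-algebra homomorphism `ρ : B →ₐ[A] A`, the induced `A`-algebra homomorphism
`ρ^L : L ⊗[A] B → L`, determined by `l ⊗ b ↦ l • ρ b`. -/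
noncomputable def rhoHom (A L B : Type*) [CommSemiring A] [CommRing L] [Algebra A L]
    [CommRing B] [Algebra A B] (ρ : B →ₐ[A] A) : TensorProduct A L B →ₐ[A] L :=
  (Algebra.TensorProduct.rid A A L).toAlgHom.comp
    (Algebra.TensorProduct.map (AlgHom.id A L) ρ)

/-!
Every maximal ideal `M` of `L ⊗[A] B` is the kernel of some `ρ^L`: its contraction to the
Artinian ring `B` is maximal, hence the kernel of some `ρ` because the residue field is `A`,
and `ker ρ^L`, which is generated by `ker ρ`, is a maximal ideal contained in `M`. So an element
is a unit as soon as no `ρ^L` kills it; by hypothesis this holds for `e r` with `r ≠ 0`, and the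
universal property of the localization `F` of `R` gives the extension.
-/

open TensorProduct Algebra.TensorProduct

section rhoHom

variable {A L B : Type*} [CommRing A] [CommRing L] [Algebra A L] [CommRing B] [Algebra A B]

lemma rhoHom_tmul (ρ : B →ₐ[A] A) (l : L) (b : B) :
    rhoHom A L B ρ (l ⊗ₜ[A] b) = ρ b • l := by
  simp [rhoHom]

lemma rhoHom_surjective (ρ : B →ₐ[A] A) : Function.Surjective (rhoHom A L B ρ) :=
  fun l => ⟨l ⊗ₜ 1, by simp [rhoHom_tmul]⟩

lemma ker_rhoHom (ρ : B →ₐ[A] A) :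
    RingHom.ker (rhoHom A L B ρ) = (RingHom.ker ρ).map (includeRight : B →ₐ[A] L ⊗[A] B) := by
  rw [← lTensor_ker _ fun a => ⟨algebraMap A B a, ρ.commutes a⟩, rhoHom]
  exact RingHom.ker_comp_of_injective _ (Algebra.TensorProduct.rid A A L).injective

end rhoHom

lemma exists_algHom_ker_eq {A B : Type*} [CommRing A] [CommRing B] [Algebra A B] (m : Ideal B)
    (h : Function.Bijective (algebraMap A (B ⧸ m))) : ∃ ρ : B →ₐ[A] A, RingHom.ker ρ = m := by
  let ρ : B →ₐ[A] A :=
    (AlgEquiv.ofBijective (Algebra.ofId A (B ⧸ m)) h).symm.toAlgHom.comp (Ideal.Quotient.mkₐ A m)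
  refine ⟨ρ, ?_⟩
  rw [← Ideal.mk_ker (I := m)]
  exact RingHom.ker_comp_of_injective _ (AlgEquiv.injective _)

lemma exists_rhoHom_ker_eq {A L B : Type*} [CommRing A] [Field L] [Algebra A L] [CommRing B]
    [Algebra A B] [IsArtinianRing B]
    (hres : ∀ m : Ideal B, m.IsMaximal → Function.Bijective (algebraMap A (B ⧸ m)))
    (M : Ideal (L ⊗[A] B)) [M.IsMaximal] : ∃ ρ : B →ₐ[A] A, RingHom.ker (rhoHom A L B ρ) = M := by
  let m := M.comap (includeRight : B →ₐ[A] L ⊗[A] B)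
  obtain ⟨ρ, hρ⟩ := exists_algHom_ker_eq m (hres m (IsArtinianRing.isMaximal_of_isPrime m))
  refine ⟨ρ, (RingHom.ker_isMaximal_of_surjective _ (rhoHom_surjective (L := L) ρ)).eq_of_le
    (Ideal.IsMaximal.ne_top ‹_›) ?_⟩
  rw [ker_rhoHom, hρ]
  exact Ideal.map_comap_le

lemma isUnit_of_forall_rhoHom_ne_zero {A L B : Type*} [CommRing A] [Field L] [Algebra A L]
    [CommRing B] [Algebra A B] [IsArtinianRing B]
    (hres : ∀ m : Ideal B, m.IsMaximal → Function.Bijective (algebraMap A (B ⧸ m)))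
    {x : L ⊗[A] B} (hx : ∀ ρ : B →ₐ[A] A, rhoHom A L B ρ x ≠ 0) : IsUnit x := by
  by_contra hunit
  obtain ⟨M, hM, hxM⟩ := exists_max_ideal_of_mem_nonunits hunit
  obtain ⟨ρ, hρ⟩ := exists_rhoHom_ker_eq hres M
  exact hx ρ (RingHom.mem_ker.mp (hρ ▸ hxM))

lemma IsLocalization.existsUnique_algHom_comp_eq {A R S P : Type*} [CommSemiring A]
    [CommSemiring R] [Algebra A R] (M : Submonoid R) [CommSemiring S] [Algebra A S] [Algebra R S]
    [IsScalarTower A R S] [IsLocalization M S] [CommSemiring P] [Algebra A P]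
    (f : R →ₐ[A] P) (hf : ∀ y : M, IsUnit (f y)) :
    ∃! g : S →ₐ[A] P, g.comp (IsScalarTower.toAlgHom A R S) = f :=
  ⟨liftAlgHom hf, AlgHom.ext fun r => lift_eq hf r,
    fun _ hg => algHom_ext M (hg.trans (AlgHom.ext fun r => (lift_eq hf r).symm))⟩

theorem exists_unique_extension_to_fractionField_general
    {A B L R F : Type*} [Field A] [CommRing B] [Algebra A B]
    [FiniteDimensional A B] [Field L] [Algebra A L]
    (hres : ∀ m : Ideal B, m.IsMaximal → Function.Bijective (algebraMap A (B ⧸ m)))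
    [CommRing R] [IsDomain R] [Algebra A R]
    [Field F] [Algebra R F] [IsFractionRing R F] [Algebra A F] [IsScalarTower A R F]
    (e : R →ₐ[A] TensorProduct A L B)
    (hinj : ∀ ρ : B →ₐ[A] A, Function.Injective ((rhoHom A L B ρ).comp e)) :
    ∃! etilde : F →ₐ[A] TensorProduct A L B,
      etilde.comp (IsScalarTower.toAlgHom A R F) = e := by
  have : IsArtinianRing B := .of_finite A B
  refine IsLocalization.existsUnique_algHom_comp_eq (nonZeroDivisors R) e fun ⟨y, hy⟩ =>
    isUnit_of_forall_rhoHom_ne_zero hres fun ρ hρy => nonZeroDivisors.ne_zero hy (hinj ρ ?_)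
  simpa using hρy

/-- Let `A` be a field of characteristic zero, `B` a finite-dimensional
commutative `A`-algebra all of whose residue fields are `A`, and `L` a field extension of `A`.
Let `R` be an integral domain which is an `A`-algebra, `F` its field of fractions, and
`e : R → L ⊗[A] B` an `A`-algebra homomorphism such that `ρ^L ∘ e` is injective for every
`A`-algebra homomorphism `ρ : B → A`.  Then there is a unique `A`-algebra homomorphism
`etilde : F → L ⊗[A] B` with `etilde ∘ (R → F) = e`. -/
theorem exists_unique_extension_to_fractionField
    {A B L R F : Type*} [Field A] [CharZero A] [CommRing B] [Algebra A B]
    [FiniteDimensional A B] [Field L] [Algebra A L]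
    (hres : ∀ m : Ideal B, m.IsMaximal → Function.Bijective (algebraMap A (B ⧸ m)))
    [CommRing R] [IsDomain R] [Algebra A R]
    [Field F] [Algebra R F] [IsFractionRing R F] [Algebra A F] [IsScalarTower A R F]
    (e : R →ₐ[A] TensorProduct A L B)
    (hinj : ∀ ρ : B →ₐ[A] A, Function.Injective ((rhoHom A L B ρ).comp e)) :
    ∃! etilde : F →ₐ[A] TensorProduct A L B,
      etilde.comp (IsScalarTower.toAlgHom A R F) = e :=
  exists_unique_extension_to_fractionField_general hres e hinj
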